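/- Let m(z) = ∫ ρ(x)/(x−z) dx be the Stieltjes transform of the semicircle density ρ(x) = (1/(2π))√(max(4−x²,0)), defined for z ∉ [−2,2]. Then m satisfies the identity m(z) + 1/m(z) + z = 0. -/

import Mathlib

open MeasureTheory

/-- The semicircle density `ρ(x) = (1/(2π))√((4−x²)₊)`. -/
noncomputable def semicircle (x : ℝ) : ℝ := (2 * Real.pi)⁻¹ * Real.sqrt (max (4 - x ^ 2) 0)

/-- The Stieltjes transform `m(z) = ∫ ρ(x)/(x − z) dx` of the semicircle law. -/
noncomputable def stieltjes (z : ℂ) : ℂ := ∫ x : ℝ, (semicircle x : ℂ) / ((x : ℂ) - z)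

/-!
Write `z = w + w⁻¹` with `‖w‖ > 1`. The substitution `x = 2 cos θ` turns `m(z)` into an integral
over `[0, π]` of a rational function of `cos θ`, which reduces to `∫₀^π (z - 2 cos θ)⁻¹ dθ`.
In `ζ = e^{iθ}` this integrand has the partial fraction form `w / (w² - 1) · (g ζ + g ζ⁻¹ - 1)`
with `g ζ = w / (w - ζ)` holomorphic on the closed unit disc, so the mean value property gives
`π w / (w² - 1)`. Hence `m(z) = -w⁻¹`, and `m + m⁻¹ = -w⁻¹ - w = -z`.
-/

open Complex ComplexConjugate Interval Metric Real Set intervalIntegral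

theorem add_inv_mem_Icc_of_norm_eq_one {w : ℂ} (hw : ‖w‖ = 1) :
    (w + w⁻¹).im = 0 ∧ (w + w⁻¹).re ∈ Icc (-2 : ℝ) 2 := by
  have hinv : w⁻¹ = conj w := by
    rw [inv_def, normSq_eq_norm_sq, hw]; simp
  have hre : |w.re| ≤ 1 := hw ▸ abs_re_le_norm w
  rw [hinv, add_conj]
  simp only [ofReal_im, ofReal_re, mem_Icc, true_and]
  constructor <;> linarith [abs_le.1 hre]

theorem exists_ne_zero_add_inv_eq (z : ℂ) : ∃ w : ℂ, w ≠ 0 ∧ w + w⁻¹ = z := by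
  obtain ⟨s, hs⟩ := IsAlgClosed.exists_pow_nat_eq (z ^ 2 - 4) two_pos
  have hprod : (z + s) / 2 * ((z - s) / 2) = 1 := by linear_combination -hs / 4
  refine ⟨(z + s) / 2, left_ne_zero_of_mul_eq_one hprod, ?_⟩
  rw [inv_eq_of_mul_eq_one_right hprod]
  ring

theorem exists_one_lt_norm_add_inv_eq {z : ℂ} (hz : ¬(z.im = 0 ∧ z.re ∈ Icc (-2 : ℝ) 2)) :
    ∃ w : ℂ, 1 < ‖w‖ ∧ w + w⁻¹ = z := by
  obtain ⟨w, hw₀, rfl⟩ := exists_ne_zero_add_inv_eq z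
  rcases lt_trichotomy ‖w‖ 1 with hlt | heq | hgt
  · refine ⟨w⁻¹, ?_, by rw [inv_inv, add_comm]⟩
    rw [norm_inv]
    exact one_lt_inv_iff₀.2 ⟨norm_pos_iff.2 hw₀, hlt⟩
  · exact absurd (add_inv_mem_Icc_of_norm_eq_one heq) hz
  · exact ⟨w, hgt, rfl⟩

theorem Function.Periodic.intervalIntegral_add_comp_neg {E : Type*} [NormedAddCommGroup E]
    [NormedSpace ℝ E] {f : ℝ → E} {a : ℝ} (hf : Function.Periodic f (2 * a))
    (hint : IntervalIntegrable f volume (-a) a) :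
    ∫ x in 0..a, (f x + f (-x)) = ∫ x in 0..2 * a, f x := by
  have h₀ : (0 : ℝ) ∈ [[-a, a]] := by
    rcases le_total 0 a with h | h <;> simp [h]
  have h₁ : IntervalIntegrable f volume (-a) 0 := hint.mono_set (uIcc_subset_uIcc_left h₀)
  have h₂ : IntervalIntegrable f volume 0 a := hint.mono_set (uIcc_subset_uIcc_right h₀)
  have h₃ : IntervalIntegrable (fun x => f (-x)) volume 0 a := by
    simpa using ((IntervalIntegrable.iff_comp_neg).1 h₁).symm
  rw [integral_add h₂ h₃, integral_comp_neg, neg_zero, add_comm,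
    integral_add_adjacent_intervals h₁ h₂]
  simpa [two_mul] using hf.intervalIntegral_add_eq (-a) 0

theorem DiffContOnCl.integral_circleMap_add_circleMap_neg {E : Type*} [NormedAddCommGroup E]
    [NormedSpace ℂ E] [CompleteSpace E] {g : ℂ → E} {c : ℂ} {R : ℝ}
    (hg : DiffContOnCl ℂ g (ball c |R|)) (hR : R ≠ 0) :
    ∫ θ in 0..π, (g (circleMap c R θ) + g (circleMap c R (-θ))) = (2 * π : ℝ) • g c := by
  have hcont : Continuous fun θ => g (circleMap c R θ) := by
    refine hg.continuousOn.comp_continuous (continuous_circleMap c R) fun θ => ?_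
    rw [closure_ball c (abs_ne_zero.2 hR)]
    exact sphere_subset_closedBall (circleMap_mem_sphere' c R θ)
  rw [((periodic_circleMap c R).comp g).intervalIntegral_add_comp_neg
    (f := fun θ => g (circleMap c R θ)) (hcont.intervalIntegrable _ _), ← hg.circleAverage,
    circleAverage_def, smul_inv_smul₀]
  positivity

theorem inv_add_inv_sub_add_inv {w ζ : ℂ} (hw₀ : w ≠ 0) (hw₁ : w ^ 2 ≠ 1) (hζ : ζ ≠ 0)
    (h₁ : w ≠ ζ) (h₂ : w ≠ ζ⁻¹) :
    (w + w⁻¹ - (ζ + ζ⁻¹))⁻¹ = w / (w ^ 2 - 1) * (w / (w - ζ) + w / (w - ζ⁻¹) - 1) := by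
  have h₁' : w - ζ ≠ 0 := sub_ne_zero.2 h₁
  have h₂' : w * ζ - 1 ≠ 0 := fun h => h₂ (eq_inv_of_mul_eq_one_left (sub_eq_zero.1 h))
  have hw₁' : w ^ 2 - 1 ≠ 0 := sub_ne_zero.2 hw₁
  have hfactor : w + w⁻¹ - (ζ + ζ⁻¹) = (w - ζ) * (w * ζ - 1) / (w * ζ) := by field_simp; ring
  rw [hfactor, inv_div]
  field_simp
  ring

theorem integral_inv_add_inv_sub_two_cos {w : ℂ} (hw : 1 < ‖w‖) :
    ∫ θ in 0..π, (w + w⁻¹ - 2 * Real.cos θ)⁻¹ = π * w / (w ^ 2 - 1) := by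
  have hw₀ : w ≠ 0 := norm_pos_iff.1 (one_pos.trans hw)
  have hw₁ : w ^ 2 ≠ 1 := fun h => hw.ne' (norm_eq_one_of_pow_eq_one h two_ne_zero)
  have hdisc : ∀ ζ ∈ closedBall (0 : ℂ) 1, w - ζ ≠ 0 := fun ζ hζ h => by
    rw [mem_closedBall_zero_iff, ← sub_eq_zero.1 h] at hζ
    linarith
  have hsphere (θ : ℝ) : w - circleMap 0 1 θ ≠ 0 :=
    hdisc _ (sphere_subset_closedBall (circleMap_mem_sphere 0 zero_le_one θ))
  set g : ℂ → ℂ := fun ζ => w / (w - ζ)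
  have hg : DiffContOnCl ℂ g (ball 0 |1|) := by
    refine DifferentiableOn.diffContOnCl fun ζ hζ => ?_
    rw [abs_one, closure_ball 0 one_ne_zero] at hζ
    exact (differentiableAt_const w).div (differentiableAt_id.const_sub w) (hdisc ζ hζ)
      |>.differentiableWithinAt
  have hpf : ∀ θ : ℝ, (w + w⁻¹ - 2 * Real.cos θ)⁻¹
      = w / (w ^ 2 - 1) * (g (circleMap 0 1 θ) + g (circleMap 0 1 (-θ)) - 1) := fun θ => by
    have hinv : (circleMap 0 1 θ)⁻¹ = circleMap 0 1 (-θ) := by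
      simp [circleMap_zero, Complex.exp_neg]
    have hcos : (2 * Real.cos θ : ℂ) = circleMap 0 1 θ + (circleMap 0 1 θ)⁻¹ := by
      simp [circleMap_zero, two_cos, Complex.exp_neg]
    rw [hcos, inv_add_inv_sub_add_inv hw₀ hw₁ (circleMap_ne_center one_ne_zero)
      (sub_ne_zero.1 (hsphere θ)) (hinv ▸ sub_ne_zero.1 (hsphere (-θ))), hinv]
  simp_rw [hpf]
  rw [intervalIntegral.integral_const_mul, integral_sub _ intervalIntegrable_const,
    hg.integral_circleMap_add_circleMap_neg one_ne_zero]
  · simp only [g, sub_zero, real_smul, ofReal_mul, ofReal_ofNat, intervalIntegral.integral_const,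
      mul_one]
    field_simp
    ring
  · refine Continuous.intervalIntegrable ?_ _ _
    simp only [g]
    fun_prop (disch := exact fun θ => hsphere _)

theorem semicircle_eq_zero_of_notMem_Icc {x : ℝ} (hx : x ∉ Icc (-2 : ℝ) 2) :
    semicircle x = 0 := by
  have h : 4 - x ^ 2 ≤ 0 := by
    rw [mem_Icc, not_and_or, not_le, not_le] at hx
    rcases hx with hx | hx <;> nlinarith
  simp [semicircle, max_eq_right h]

theorem semicircle_two_mul_cos {θ : ℝ} (hθ : θ ∈ Icc 0 π) :
    semicircle (2 * Real.cos θ) = Real.sin θ / π := by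
  have hsin : 0 ≤ Real.sin θ := sin_nonneg_of_nonneg_of_le_pi hθ.1 hθ.2
  have h : 4 - (2 * Real.cos θ) ^ 2 = (2 * Real.sin θ) ^ 2 := by
    nlinarith [Real.sin_sq_add_cos_sq θ]
  rw [semicircle, h, max_eq_left (by positivity), sqrt_sq (by positivity)]
  field_simp

theorem stieltjes_eq_intervalIntegral (z : ℂ) :
    stieltjes z = ∫ x in -2..2, (semicircle x : ℂ) / (x - z) := by
  rw [stieltjes, integral_of_le (by norm_num), ← integral_Icc_eq_integral_Ioc,
    setIntegral_eq_integral_of_forall_compl_eq_zero fun x hx => by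
      simp [semicircle_eq_zero_of_notMem_Icc hx] ]

theorem stieltjes_eq_integral_two_mul_cos (z : ℂ) :
    stieltjes z = ∫ θ in 0..π,
      (2 * Real.sin θ) • ((semicircle (2 * Real.cos θ) : ℂ) / (2 * Real.cos θ - z)) := by
  have hsubst := integral_deriv_smul_comp_of_deriv_nonpos (a := 0) (b := π)
    (f := fun θ => 2 * Real.cos θ) (f' := fun θ => -2 * Real.sin θ)
    (g := fun x : ℝ => (semicircle x : ℂ) / (x - z))
    (by fun_prop) (fun θ _ => by simpa using (Real.hasDerivAt_cos θ).const_mul 2)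
    (fun θ hθ => by
      rw [min_eq_left pi_pos.le, max_eq_right pi_pos.le] at hθ
      nlinarith [sin_pos_of_pos_of_lt_pi hθ.1 hθ.2])
  simp only [Function.comp_apply, Real.cos_zero, Real.cos_pi, mul_one, mul_neg, neg_mul, neg_smul,
    intervalIntegral.integral_neg, ofReal_mul, ofReal_ofNat] at hsubst
  rw [stieltjes_eq_intervalIntegral, integral_symm, ← hsubst, neg_neg]

theorem stieltjes_eq_integral_inv_sub_two_cos {z : ℂ} (hz : ∀ x ∈ Icc (-2 : ℝ) 2, (x : ℂ) ≠ z) :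
    stieltjes z = (z ^ 2 - 4) / (2 * π) * (∫ θ in 0..π, (z - 2 * Real.cos θ)⁻¹) - z / 2 := by
  have hden (θ : ℝ) : z - 2 * Real.cos θ ≠ 0 := by
    have hne := hz (2 * Real.cos θ)
      ⟨by linarith [Real.neg_one_le_cos θ], by linarith [Real.cos_le_one θ]⟩
    rw [ofReal_mul, ofReal_ofNat] at hne
    exact sub_ne_zero.2 hne.symm
  have hpt : EqOn
      (fun θ : ℝ => (2 * Real.sin θ) • ((semicircle (2 * Real.cos θ) : ℂ) / (2 * Real.cos θ - z)))
      (fun θ : ℝ => (z ^ 2 - 4) / (2 * π) * (z - 2 * Real.cos θ)⁻¹ - (z + 2 * Real.cos θ) / (2 * π))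
      [[0, π]] := fun θ hθ => by
    rw [uIcc_of_le pi_pos.le] at hθ
    have hsc : (Real.sin θ : ℂ) ^ 2 + (Real.cos θ : ℂ) ^ 2 = 1 := by
      exact_mod_cast Real.sin_sq_add_cos_sq θ
    have hden₁ := hden θ
    have hden₂ : 2 * (Real.cos θ : ℂ) - z ≠ 0 := fun h => hden θ (by linear_combination -h)
    simp only [semicircle_two_mul_cos hθ, real_smul, ofReal_mul, ofReal_div, ofReal_ofNat]
    field_simp
    linear_combination 4 * (z - 2 * Real.cos θ) * hsc
  have hint : IntervalIntegrable (fun θ : ℝ => (z - 2 * Real.cos θ)⁻¹) volume 0 π := by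
    refine Continuous.intervalIntegrable ?_ _ _
    fun_prop (disch := exact hden)
  have hmean : ∫ θ in 0..π, (z + 2 * Real.cos θ : ℂ) = π * z := by
    rw [integral_add intervalIntegrable_const (by apply Continuous.intervalIntegrable; fun_prop),
      intervalIntegral.integral_const_mul, intervalIntegral.integral_ofReal, integral_cos]
    simp
  rw [stieltjes_eq_integral_two_mul_cos, integral_congr hpt, integral_sub (hint.const_mul _)
    (by apply Continuous.intervalIntegrable; fun_prop), intervalIntegral.integral_const_mul,
    intervalIntegral.integral_div, hmean]
  field_simp

/-- For `z ∉ [−2,2]`, the semicircle Stieltjes transform satisfies `m(z) + 1/m(z) + z = 0`. -/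
theorem stieltjes_self_consistent (z : ℂ)
    (hz : ¬(z.im = 0 ∧ z.re ∈ Set.Icc (-2 : ℝ) 2)) :
    stieltjes z + (stieltjes z)⁻¹ + z = 0 := by
  have hz' : ∀ x ∈ Icc (-2 : ℝ) 2, (x : ℂ) ≠ z := by
    rintro x hx rfl
    exact hz ⟨ofReal_im x, by rwa [ofReal_re]⟩
  obtain ⟨w, hw, rfl⟩ := exists_one_lt_norm_add_inv_eq hz
  have hw₀ : w ≠ 0 := norm_pos_iff.1 (one_pos.trans hw)
  have hw₁ : w ^ 2 - 1 ≠ 0 :=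
    sub_ne_zero.2 fun h => hw.ne' (norm_eq_one_of_pow_eq_one h two_ne_zero)
  have hm : stieltjes (w + w⁻¹) = -w⁻¹ := by
    rw [stieltjes_eq_integral_inv_sub_two_cos hz', integral_inv_add_inv_sub_two_cos hw]
    field_simp
    ring
  rw [hm, inv_neg, inv_inv]
  ring
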